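/- Let k be an algebraically closed field of characteristic ≠ 2, V a k-vector space of dimension n, and let q, φ be symmetric bilinear forms on V with q nondegenerate. Suppose the polynomial λ ↦ det(φ − λ q) (computed via Gram matrices in any basis) has n distinct roots λ_1, …, λ_n in k. Then V decomposes as a direct sum of n lines L_1 ⊕ ⋯ ⊕ L_n that are pairwise orthogonal for both q and φ, and φ restricted to L_i equals λ_i times q restricted to L_i. -/

import Mathlib

/-!
A root `μ` of `det(φ - μ q)` yields a nonzero `v` with `φ v = μ • q v`. As `q` is nondegenerate,
such a `v` is an eigenvector of the operator `q⁻¹ ∘ φ` for the eigenvalue `μ`, so vectors for the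
`n` distinct roots are linearly independent and form a basis. Symmetry of both forms gives
`μ q(v, w) = φ(v, w) = μ' q(v, w)`, so vectors for distinct roots are orthogonal for `q`, hence
for `φ`.
-/

namespace LinearMap.BilinForm

variable {K V : Type*} [Field K] [AddCommGroup V] [Module K V] {q φ : LinearMap.BilinForm K V}

theorem exists_ne_zero_apply_eq_smul_of_det_eq_zero {ι : Type*} [Fintype ι] [DecidableEq ι]
    (b : Module.Basis ι K V) {μ : K}
    (h : (toMatrix₂ b b φ - μ • toMatrix₂ b b q).det = 0) : ∃ v ≠ 0, φ v = μ • q v := by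
  rw [← map_smul, ← map_sub, ← not_ne_iff, ← separatingLeft_iff_det_ne_zero, SeparatingLeft] at h
  push Not at h
  obtain ⟨v, hv, hv0⟩ := h
  exact ⟨v, hv0, LinearMap.ext fun w => sub_eq_zero.1 (hv w)⟩

theorem apply_eq_zero_of_apply_eq_smul_of_ne (hq : q.IsSymm) (hφ : φ.IsSymm) {v w : V} {a b : K}
    (hv : φ v = a • q v) (hw : φ w = b • q w) (hab : a ≠ b) : q v w = 0 := by
  have ha : φ v w = a * q v w := by rw [hv]; rfl
  have hb : φ v w = b * q v w := by rw [hφ.eq, hw, hq.eq]; rfl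
  have : (a - b) * q v w = 0 := by linear_combination hb - ha
  exact (mul_eq_zero.1 this).resolve_left (sub_ne_zero.2 hab)

theorem linearIndependent_of_apply_eq_smul [FiniteDimensional K V] (hq : q.Nondegenerate)
    {ι : Type*} {v : ι → V} {lam : ι → K} (hlam : Function.Injective lam) (hv0 : ∀ i, v i ≠ 0)
    (hv : ∀ i, φ (v i) = lam i • q (v i)) : LinearIndependent K v := by
  set T := φ.symmCompOfNondegenerate q hq
  have hT : ∀ i, T (v i) = lam i • v i := fun i =>
    LinearMap.ker_eq_bot.1 hq.ker_eq_bot <| by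
      rw [comp_symmCompOfNondegenerate_apply, hv, map_smul]
  exact Module.End.eigenvectors_linearIndependent' T lam hlam v fun i =>
    ⟨Module.End.mem_eigenspace_iff.2 (hT i), hv0 i⟩

end LinearMap.BilinForm

theorem pencil_general_position_diagonalization_general
    {k V : Type*} [Field k] [AddCommGroup V] [Module k V]
    (n : ℕ) (bV : Module.Basis (Fin n) k V)
    (q φ : V →ₗ[k] V →ₗ[k] k)
    (hqsymm : ∀ x y, q x y = q y x) (hφsymm : ∀ x y, φ x y = φ y x)
    (hqnd : ∀ x, (∀ y, q x y = 0) → x = 0)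
    (lam : Fin n → k) (hinj : Function.Injective lam)
    (hroot : ∀ i, Matrix.det
        ((Matrix.of fun r s => φ (bV r) (bV s)) - lam i • Matrix.of fun r s => q (bV r) (bV s))
      = 0) :
    ∃ c : Module.Basis (Fin n) k V,
      (∀ i j, i ≠ j → q (c i) (c j) = 0 ∧ φ (c i) (c j) = 0) ∧
        ∀ i, φ (c i) (c i) = lam i * q (c i) (c i) := by
  have : FiniteDimensional k V := .of_basis bV
  have hqs : LinearMap.BilinForm.IsSymm q := ⟨hqsymm⟩
  have hφs : LinearMap.BilinForm.IsSymm φ := ⟨hφsymm⟩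
  have hq : q.Nondegenerate := hqs.isRefl.nondegenerate_iff_separatingLeft.2 hqnd
  choose v hv0 hv using fun i =>
    LinearMap.BilinForm.exists_ne_zero_apply_eq_smul_of_det_eq_zero bV (φ := φ) (q := q)
      (μ := lam i) (by convert hroot i using 3 <;> ext <;> simp)
  let c := basisOfLinearIndependentOfCardEqFinrank' v
    (LinearMap.BilinForm.linearIndependent_of_apply_eq_smul hq hinj hv0 hv)
    (by simp [Module.finrank_eq_card_basis bV])
  have hc : ⇑c = v := coe_basisOfLinearIndependentOfCardEqFinrank' ..
  refine ⟨c, fun i j hij => ?_, fun i => ?_⟩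
  · have hq0 :=
      LinearMap.BilinForm.apply_eq_zero_of_apply_eq_smul_of_ne hqs hφs (hv i) (hv j) (hinj.ne hij)
    rw [hc]
    refine ⟨hq0, ?_⟩
    rw [hv i, LinearMap.smul_apply, hq0, smul_zero]
  · rw [hc, hv i]
    rfl

/-- Simultaneous diagonalization of a pencil of quadrics in general position: if `q` is
nondegenerate and `det(φ - λq)` has `n` distinct roots `λ_1, …, λ_n`, then there is a
basis whose lines are pairwise orthogonal for both forms, with `φ = λ_i · q` on the
`i`-th line. -/
theorem pencil_general_position_diagonalization
    {k V : Type*} [Field k] [IsAlgClosed k] [AddCommGroup V] [Module k V]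
    (hchar : ringChar k ≠ 2) (n : ℕ) (bV : Module.Basis (Fin n) k V)
    (q φ : V →ₗ[k] V →ₗ[k] k)
    (hqsymm : ∀ x y, q x y = q y x) (hφsymm : ∀ x y, φ x y = φ y x)
    (hqnd : ∀ x, (∀ y, q x y = 0) → x = 0)
    (lam : Fin n → k) (hinj : Function.Injective lam)
    (hroot : ∀ i, Matrix.det
        ((Matrix.of fun r s => φ (bV r) (bV s)) - lam i • Matrix.of fun r s => q (bV r) (bV s))
      = 0) :
    ∃ c : Module.Basis (Fin n) k V,
      (∀ i j, i ≠ j → q (c i) (c j) = 0 ∧ φ (c i) (c j) = 0) ∧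
        ∀ i, φ (c i) (c i) = lam i * q (c i) (c i) :=
  pencil_general_position_diagonalization_general n bV q φ hqsymm hφsymm hqnd lam hinj hroot
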